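/- Let x₀ ∈ ℝ^n with x₀ ≠ 0, let V ∈ ℝ^{n×ξ} be a matrix whose first column is x₀/‖x₀‖ (i.e., V e₁ = x₀/‖x₀‖), let H ∈ ℝ^{ξ×ξ}, δ > 0, and let η ≥ 2 be an integer with ‖H‖_∞ δ/(η+2) < 1 and Φ = (‖H‖_∞ δ)^{η+1}/((η+1)!) · 1/(1 − ‖H‖_∞ δ/(η+2)). Define x̂(t) = ‖x₀‖ V exp(H t) e₁. Then for every t ∈ [0, δ] there exist real numbers τ_i ∈ [(i^{−i/(i−1)} − i^{−1/(i−1)}) δ^i, 0] for i = 2, …, η and a matrix E ∈ ℝ^{ξ×ξ} with |E_{jk}| ≤ Φ for all j, k, such that x̂(t) = x₀ + (t/δ)(x̂(δ) − x₀) + ‖x₀‖ V (Σ_{i=2}^η τ_i H^i/i! + E) e₁. -/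

import Mathlib

/-!
Expanding `exp (t H) = ∑ tⁱ Hⁱ / i!`, the chord `x₀ + (t/δ)(x̂(δ) - x₀)` reproduces the terms of
order `0` and `1`, so the `i`-th term of the error is `(tⁱ - t δ^(i-1)) Hⁱ / i!`. Writing `t = u δ`
with `u ∈ [0, 1]`, this coefficient is `(uⁱ - u) δⁱ`, which lies between `0` and the minimum of
`uⁱ - u` on `[0, ∞)`. The terms of order `> η` have `‖·‖_∞`-norm at most `(‖H‖_∞ δ)ⁱ / i!`, and
`(η+1)! (η+2)ᵏ ≤ (η+1+k)!` dominates their sum by a geometric series of ratio `‖H‖_∞ δ / (η+2)`;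
entries of a matrix are bounded by its `‖·‖_∞`-norm.
-/

open Matrix Set

/-- Matrix exponential of a real square matrix. -/
noncomputable def mexp {m : ℕ} (A : Matrix (Fin m) (Fin m) ℝ) : Matrix (Fin m) (Fin m) ℝ :=
  NormedSpace.exp A

/-- Euclidean norm of a vector in `ℝ^m`. -/
noncomputable def euclNorm {m : ℕ} (x : Fin m → ℝ) : ℝ :=
  ‖(WithLp.toLp 2 x : EuclideanSpace ℝ (Fin m))‖

/-- First standard basis vector of `ℝ^ξ`. -/
noncomputable def e1 {ξ : ℕ} [NeZero ξ] : Fin ξ → ℝ := Pi.single 0 1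

/-- Maximum absolute row sum norm (`‖·‖_∞`) of a matrix. -/
noncomputable def rowSumNorm {m : ℕ} (H : Matrix (Fin m) (Fin m) ℝ) : ℝ :=
  ⨆ i, ∑ j, |H i j|

/-- Lower endpoint `(i^{−i/(i−1)} − i^{−1/(i−1)}) δ^i` of the correction interval. -/
noncomputable def tauLo (i : ℕ) (δ : ℝ) : ℝ :=
  ((i : ℝ) ^ (-(i : ℝ) / ((i : ℝ) - 1)) - (i : ℝ) ^ (-(1 : ℝ) / ((i : ℝ) - 1))) * δ ^ i

open scoped Nat

section RealBounds

lemma pow_add_mul_sub_le_pow {b u : ℝ} (hb : 0 < b) (hu : 0 ≤ u) (i : ℕ) :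
    b ^ i + i * b ^ (i - 1) * (u - b) ≤ u ^ i := by
  rcases Nat.eq_zero_or_pos i with rfl | hi
  · simp
  have bernoulli := one_add_mul_le_pow (a := u / b - 1) (by linarith [div_nonneg hu hb.le]) i
  rw [add_sub_cancel, div_pow] at bernoulli
  calc b ^ i + i * b ^ (i - 1) * (u - b) = b ^ i * (1 + i * (u / b - 1)) := by
        rw [← pow_sub_one_mul hi.ne' b]; field_simp
    _ ≤ b ^ i * (u ^ i / b ^ i) := by gcongr
    _ = u ^ i := mul_div_cancel₀ _ (pow_ne_zero _ hb.ne')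

/-- The minimum of `u ↦ u ^ i - u` on `[0, ∞)` is attained at `u = i ^ (-1 / (i - 1))`. -/
lemma rpow_sub_rpow_le_pow_sub_self {i : ℕ} (hi : 2 ≤ i) {u : ℝ} (hu : 0 ≤ u) :
    (i : ℝ) ^ (-(i : ℝ) / ((i : ℝ) - 1)) - (i : ℝ) ^ (-(1 : ℝ) / ((i : ℝ) - 1)) ≤ u ^ i - u := by
  have hi1 : (1 : ℝ) < i := by exact_mod_cast hi
  have hi0 : (0 : ℝ) < i := by linarith
  set b := (i : ℝ) ^ (-(1 : ℝ) / ((i : ℝ) - 1))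
  have hb : 0 < b := Real.rpow_pos_of_pos hi0 _
  have hb_pred : b ^ (i - 1) = (i : ℝ)⁻¹ := by
    rw [← Real.rpow_natCast, ← Real.rpow_mul hi0.le, Nat.cast_pred (by omega),
      div_mul_cancel₀ _ (by linarith), Real.rpow_neg_one]
  have hb_pow : (i : ℝ) ^ (-(i : ℝ) / ((i : ℝ) - 1)) = b ^ i := by
    rw [← Real.rpow_natCast b, ← Real.rpow_mul hi0.le]
    ring_nf
  have tangent := pow_add_mul_sub_le_pow hb hu i
  rw [hb_pred, mul_inv_cancel₀ hi0.ne', one_mul] at tangent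
  rw [hb_pow]
  linarith

variable {t δ : ℝ} {i : ℕ}

lemma pow_le_mul_pow_pred (ht : 0 ≤ t) (htδ : t ≤ δ) (hi : i ≠ 0) : t ^ i ≤ t * δ ^ (i - 1) := by
  rw [← mul_pow_sub_one hi t]
  exact mul_le_mul_of_nonneg_left (pow_le_pow_left₀ ht htδ _) ht

lemma mul_pow_pred_le_pow (ht : 0 ≤ t) (htδ : t ≤ δ) (hi : i ≠ 0) : t * δ ^ (i - 1) ≤ δ ^ i := by
  rw [← mul_pow_sub_one hi δ]
  exact mul_le_mul_of_nonneg_right htδ (pow_nonneg (ht.trans htδ) _)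

lemma div_mul_pow_eq_mul_pow_pred (hδ : δ ≠ 0) (hi : i ≠ 0) : t / δ * δ ^ i = t * δ ^ (i - 1) := by
  rw [← mul_pow_sub_one hi δ]
  field_simp

lemma pow_sub_mul_pow_pred_mem_Icc (hi : 2 ≤ i) (hδ : 0 < δ) (ht : t ∈ Icc 0 δ) :
    t ^ i - t * δ ^ (i - 1) ∈ Icc (tauLo i δ) 0 := by
  obtain ⟨ht0, htδ⟩ := ht
  have hrescale : t ^ i - t * δ ^ (i - 1) = ((t / δ) ^ i - t / δ) * δ ^ i := by
    rw [sub_mul, div_pow, div_mul_cancel₀ _ (pow_ne_zero _ hδ.ne'),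
      div_mul_pow_eq_mul_pow_pred hδ.ne' (by omega)]
  constructor
  · rw [hrescale, tauLo]
    exact mul_le_mul_of_nonneg_right (rpow_sub_rpow_le_pow_sub_self hi (div_nonneg ht0 hδ.le))
      (pow_nonneg hδ.le i)
  · linarith [pow_le_mul_pow_pred ht0 htδ (i := i) (by omega)]

lemma pow_add_div_factorial_le {a : ℝ} (ha : 0 ≤ a) (m k : ℕ) :
    a ^ (m + k) / (m + k)! ≤ a ^ m / m ! * (a / (m + 1)) ^ k := by
  have hfact : (m ! : ℝ) * (m + 1) ^ k ≤ (m + k)! := by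
    exact_mod_cast Nat.factorial_mul_pow_le_factorial
  rw [div_pow, div_mul_div_comm, pow_add]
  exact div_le_div_of_nonneg_left (by positivity) (by positivity) hfact

end RealBounds

section ExpInterpolation

variable {𝔸 : Type*} [NormedRing 𝔸] [NormedAlgebra ℝ 𝔸] {x : 𝔸} {s t δ : ℝ}

lemma norm_div_factorial_smul_pow_le (hx : ‖x‖ ≤ s) (hδ : 0 < δ) (ht : t ∈ Icc 0 δ) {i : ℕ}
    (hi : i ≠ 0) : ‖((t ^ i - t / δ * δ ^ i) / i !) • x ^ i‖ ≤ (s * δ) ^ i / i ! := by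
  obtain ⟨ht0, htδ⟩ := ht
  have hcoeff : |t ^ i - t / δ * δ ^ i| ≤ δ ^ i := by
    rw [div_mul_pow_eq_mul_pow_pred hδ.ne' hi]
    simpa using abs_sub_le_of_le_of_le (pow_nonneg ht0 i)
      ((pow_le_mul_pow_pred ht0 htδ hi).trans (mul_pow_pred_le_pow ht0 htδ hi))
      (mul_nonneg ht0 (pow_nonneg hδ.le _)) (mul_pow_pred_le_pow ht0 htδ hi)
  have hpow : ‖x ^ i‖ ≤ s ^ i :=
    (norm_pow_le' x (Nat.pos_of_ne_zero hi)).trans (pow_le_pow_left₀ (norm_nonneg x) hx i)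
  calc ‖((t ^ i - t / δ * δ ^ i) / i !) • x ^ i‖ = |t ^ i - t / δ * δ ^ i| / i ! * ‖x ^ i‖ := by
        rw [norm_smul, Real.norm_eq_abs, abs_div, Nat.abs_cast]
    _ ≤ δ ^ i / i ! * s ^ i := by gcongr
    _ = (s * δ) ^ i / i ! := by ring

lemma sum_range_div_factorial_smul_pow (hδ : δ ≠ 0) (N : ℕ) :
    ∑ i ∈ Finset.range (N + 1), ((t ^ i - t / δ * δ ^ i) / i !) • x ^ i
      = (1 - t / δ) • 1 + ∑ i ∈ Finset.Icc 2 N, ((t ^ i - t * δ ^ (i - 1)) / i !) • x ^ i := by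
  have hsub : insert 0 (Finset.Icc 2 N) ⊆ Finset.range (N + 1) := by
    intro i hi
    simp only [Finset.mem_insert, Finset.mem_Icc, Finset.mem_range] at hi ⊢
    omega
  have hone : ∀ i ∈ Finset.range (N + 1), i ∉ insert 0 (Finset.Icc 2 N) →
      ((t ^ i - t / δ * δ ^ i) / i !) • x ^ i = 0 := by
    intro i hiN hi
    obtain rfl : i = 1 := by
      simp only [Finset.mem_range, Finset.mem_insert, Finset.mem_Icc] at hiN hi
      omega
    simp [div_mul_cancel₀ _ hδ]
  rw [← Finset.sum_subset hsub hone, Finset.sum_insert (by simp)]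
  congr 1
  · simp
  · refine Finset.sum_congr rfl fun i hi => ?_
    have hi0 : i ≠ 0 := by simp only [Finset.mem_Icc] at hi; omega
    rw [div_mul_pow_eq_mul_pow_pred hδ hi0]

variable [CompleteSpace 𝔸]

variable (x) in
lemma hasSum_exp_smul (s : ℝ) :
    HasSum (fun i : ℕ => (s ^ i / i !) • x ^ i) (NormedSpace.exp (s • x)) := by
  convert NormedSpace.exp_series_hasSum_exp' (𝕂 := ℝ) (s • x) using 2 with i
  rw [smul_pow, smul_smul, div_eq_inv_mul]

variable (x t δ) in
lemma hasSum_exp_smul_sub_smul_exp :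
    HasSum (fun i : ℕ => ((t ^ i - t / δ * δ ^ i) / i !) • x ^ i)
      (NormedSpace.exp (t • x) - (t / δ) • NormedSpace.exp (δ • x)) := by
  simpa only [smul_smul, ← sub_smul, sub_div, mul_div_assoc] using
    (hasSum_exp_smul x t).sub ((hasSum_exp_smul x δ).const_smul (t / δ))

theorem exists_exp_smul_eq_linear_interp_add (hx : ‖x‖ ≤ s) (hδ : 0 < δ) (ht : t ∈ Icc 0 δ)
    (N : ℕ) (hsmall : s * δ / (N + 2) < 1) :
    ∃ E : 𝔸, ‖E‖ ≤ (s * δ) ^ (N + 1) / (N + 1)! / (1 - s * δ / (N + 2)) ∧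
      NormedSpace.exp (t • x) = 1 + (t / δ) • (NormedSpace.exp (δ • x) - 1)
        + (∑ i ∈ Finset.Icc 2 N, ((t ^ i - t * δ ^ (i - 1)) / i !) • x ^ i + E) := by
  have hs : 0 ≤ s := (norm_nonneg x).trans hx
  have hr : 0 ≤ s * δ / (N + 2) := by positivity
  have htail := (hasSum_nat_add_iff' (N + 1)).mpr (hasSum_exp_smul_sub_smul_exp x t δ)
  have hgeom := (hasSum_geometric_of_lt_one hr hsmall).mul_left ((s * δ) ^ (N + 1) / (N + 1)!)
  refine ⟨_, (htail.norm_le_of_bounded hgeom fun k => ?_).trans_eq (div_eq_mul_inv _ _).symm, ?_⟩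
  · calc _ ≤ (s * δ) ^ (N + 1 + k) / (N + 1 + k)! := by
          rw [add_comm k]; exact norm_div_factorial_smul_pow_le hx hδ ht (by omega)
      _ ≤ _ := by
          have := pow_add_div_factorial_le (mul_nonneg hs hδ.le) (N + 1) k
          push_cast at this ⊢
          convert this using 4; ring
  · rw [sum_range_div_factorial_smul_pow hδ.ne' N]
    module

end ExpInterpolation

section LinftyOpNorm

open scoped Matrix.Norms.Operator

lemma norm_entry_le_linfty_opNorm {m n α : Type*} [Fintype m] [Fintype n]
    [SeminormedAddCommGroup α] (A : Matrix m n α) (i : m) (j : n) : ‖A i j‖ ≤ ‖A‖ := by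
  have : ‖A i j‖₊ ≤ ‖A‖₊ := by
    rw [linfty_opNNNorm_def]
    exact (Finset.single_le_sum (fun _ _ => zero_le) (Finset.mem_univ j)).trans
      (Finset.le_sup (f := fun i => ∑ j, ‖A i j‖₊) (Finset.mem_univ i))
  exact_mod_cast this

lemma linfty_opNorm_le_rowSumNorm {m : ℕ} (A : Matrix (Fin m) (Fin m) ℝ) :
    ‖A‖ ≤ rowSumNorm A := by
  have hnonneg : 0 ≤ rowSumNorm A :=
    Real.iSup_nonneg fun i => Finset.sum_nonneg fun j _ => abs_nonneg (A i j)
  rw [linfty_opNorm_def, ← NNReal.coe_mk (rowSumNorm A) hnonneg, NNReal.coe_le_coe,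
    Finset.sup_le_iff]
  intro i _
  rw [← NNReal.coe_le_coe]
  push_cast
  exact le_ciSup (f := fun i => ∑ j, |A i j|) (Set.finite_range _).bddAbove i

end LinftyOpNorm

lemma euclNorm_smul_inv_smul {m : ℕ} (x : Fin m → ℝ) : euclNorm x • (euclNorm x)⁻¹ • x = x := by
  by_cases hx : x = 0
  · simp [hx]
  · exact smul_inv_smul₀ (by simpa [euclNorm] using hx) x

theorem stmt9_general {n ξ : ℕ} [NeZero ξ]
    (x₀ : Fin n → ℝ)
    (V : Matrix (Fin n) (Fin ξ) ℝ) (hV : V *ᵥ e1 = (euclNorm x₀)⁻¹ • x₀)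
    (H : Matrix (Fin ξ) (Fin ξ) ℝ) (δ : ℝ) (hδ : 0 < δ)
    (η : ℕ) (hsmall : rowSumNorm H * δ / ((η : ℝ) + 2) < 1)
    (Φ : ℝ)
    (hΦ : Φ = (rowSumNorm H * δ) ^ (η + 1) / ((Nat.factorial (η + 1) : ℝ))
        * (1 / (1 - rowSumNorm H * δ / ((η : ℝ) + 2))))
    (xhat : ℝ → Fin n → ℝ)
    (hxhat : ∀ t, xhat t = euclNorm x₀ • (V *ᵥ (mexp (t • H) *ᵥ e1)))
    (t : ℝ) (ht : t ∈ Set.Icc 0 δ) :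
    ∃ (τ : ℕ → ℝ) (E : Matrix (Fin ξ) (Fin ξ) ℝ),
      (∀ i ∈ Finset.Icc 2 η, τ i ∈ Set.Icc (tauLo i δ) 0) ∧
      (∀ j k, |E j k| ≤ Φ) ∧
      xhat t = x₀ + (t / δ) • (xhat δ - x₀)
        + euclNorm x₀ • (V *ᵥ
            ((∑ i ∈ Finset.Icc 2 η, (τ i / (Nat.factorial i : ℝ)) • H ^ i + E) *ᵥ e1)) := by
  open scoped Matrix.Norms.Operator in
  obtain ⟨E, hE, hexp⟩ :=
    exists_exp_smul_eq_linear_interp_add (linfty_opNorm_le_rowSumNorm H) hδ ht η hsmall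
  refine ⟨fun i => t ^ i - t * δ ^ (i - 1), E,
    fun i hi => pow_sub_mul_pow_pred_mem_Icc (Finset.mem_Icc.mp hi).1 hδ ht,
    fun j k => ?_, ?_⟩
  · open scoped Matrix.Norms.Operator in
    exact (norm_entry_le_linfty_opNorm E j k).trans (by rwa [hΦ, mul_one_div])
  · have hx₀ : euclNorm x₀ • (V *ᵥ e1) = x₀ := by rw [hV, euclNorm_smul_inv_smul]
    -- restated with the default matrix instances, definitionally equal to the `L∞` ones
    have hmexp : mexp (t • H) = 1 + (t / δ) • (mexp (δ • H) - 1)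
        + (∑ i ∈ Finset.Icc 2 η, ((t ^ i - t * δ ^ (i - 1)) / i !) • H ^ i + E) := hexp
    rw [hxhat, hxhat, hmexp]
    set c := euclNorm x₀
    rw [← hx₀]
    simp only [add_mulVec, smul_mulVec, one_mulVec, sub_mulVec, mulVec_add, mulVec_smul,
      mulVec_sub, smul_add, smul_sub]
    module

/-- Time-interval enclosure of the approximate homogeneous solution:
with `x̂(t) = ‖x₀‖ V exp(H t) e₁` and `V e₁ = x₀/‖x₀‖`, for each `t ∈ [0, δ]` one has
`x̂(t) = x₀ + (t/δ)(x̂(δ) − x₀) + ‖x₀‖ V (Σ_{i=2}^η τᵢ Hⁱ/i! + E) e₁` for suitable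
`τᵢ` in the correction intervals and `E` with entries bounded by `Φ`. -/
theorem stmt9 {n ξ : ℕ} [NeZero ξ]
    (x₀ : Fin n → ℝ) (hx₀ : x₀ ≠ 0)
    (V : Matrix (Fin n) (Fin ξ) ℝ) (hV : V *ᵥ e1 = (euclNorm x₀)⁻¹ • x₀)
    (H : Matrix (Fin ξ) (Fin ξ) ℝ) (δ : ℝ) (hδ : 0 < δ)
    (η : ℕ) (hη : 2 ≤ η) (hsmall : rowSumNorm H * δ / ((η : ℝ) + 2) < 1)
    (Φ : ℝ)
    (hΦ : Φ = (rowSumNorm H * δ) ^ (η + 1) / ((Nat.factorial (η + 1) : ℝ))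
        * (1 / (1 - rowSumNorm H * δ / ((η : ℝ) + 2))))
    (xhat : ℝ → Fin n → ℝ)
    (hxhat : ∀ t, xhat t = euclNorm x₀ • (V *ᵥ (mexp (t • H) *ᵥ e1)))
    (t : ℝ) (ht : t ∈ Set.Icc 0 δ) :
    ∃ (τ : ℕ → ℝ) (E : Matrix (Fin ξ) (Fin ξ) ℝ),
      (∀ i ∈ Finset.Icc 2 η, τ i ∈ Set.Icc (tauLo i δ) 0) ∧
      (∀ j k, |E j k| ≤ Φ) ∧
      xhat t = x₀ + (t / δ) • (xhat δ - x₀)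
        + euclNorm x₀ • (V *ᵥ
            ((∑ i ∈ Finset.Icc 2 η, (τ i / (Nat.factorial i : ℝ)) • H ^ i + E) *ᵥ e1)) :=
  stmt9_general x₀ V hV H δ hδ η hsmall Φ hΦ xhat hxhat t ht
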